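/- arXiv:2512.01092 — 2 statements merged into one kernel-verified Lean document; each statement's English description precedes it below -/
import Mathlib

section
/- The Jaccard distance d(A,B) = 1 − |A ∩ B|/|A ∪ B| on finite subsets of a set satisfies the triangle inequality: d(A,C) ≤ d(A,B) + d(B,C). -/
open Finset

lemma jaccard_key (p q ac ab bc r : ℝ)
    (hp : 0 ≤ p) (hq : 0 ≤ q) (hac : 0 ≤ ac) (hab : 0 ≤ ab) (hbc : 0 ≤ bc) (hr : 0 ≤ r)
    (h1 : ac ≤ p + q) (h2 : ab ≤ q + r) (h3 : bc ≤ p + r)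
    (d1 : 0 < ac + r) (d2 : 0 < p + ab) (d3 : 0 < q + bc) :
    1 - r / (ac + r) ≤ (1 - ab / (p + ab)) + (1 - bc / (q + bc)) := by
  have ds : 0 < p + q + r := by linarith
  have e1 : 1 - r / (ac + r) = ac / (ac + r) := by field_simp; ring
  have e2 : 1 - ab / (p + ab) = p / (p + ab) := by field_simp; ring
  have e3 : 1 - bc / (q + bc) = q / (q + bc) := by field_simp; ring
  rw [e1, e2, e3]
  have step1 : ac / (ac + r) ≤ (p + q) / (p + q + r) := by
    rw [div_le_div_iff₀ d1 ds]
    nlinarith [mul_le_mul_of_nonneg_right h1 hr]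
  have step2 : p / (p + q + r) ≤ p / (p + ab) := by
    apply div_le_div_of_nonneg_left hp d2
    linarith
  have step3 : q / (p + q + r) ≤ q / (q + bc) := by
    apply div_le_div_of_nonneg_left hq d3
    linarith
  have : (p + q) / (p + q + r) = p / (p + q + r) + q / (p + q + r) := by ring
  linarith

lemma jaccard_card_union {α : Type*} [DecidableEq α] (A B : Finset α) :
    (A ∪ B).card = (symmDiff A B).card + (A ∩ B).card := by
  have h := card_union_of_disjoint (disjoint_symmDiff_inf A B)
  rw [← sup_eq_union, symmDiff_sup_inf] at h
  simpa [sup_eq_union, inf_eq_inter] using h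

/-- Jaccard distance on finite sets, with `d(∅, ∅) = 0`. -/
noncomputable def jaccardDist {α : Type*} [DecidableEq α] (A B : Finset α) : ℝ :=
  if (A ∪ B) = ∅ then 0 else 1 - ((A ∩ B).card : ℝ) / ((A ∪ B).card : ℝ)

/-- The Jaccard (Steinhaus) distance satisfies the triangle inequality. -/
theorem jaccardDist_triangle {α : Type*} [DecidableEq α] (A B C : Finset α) :
    jaccardDist A C ≤ jaccardDist A B + jaccardDist B C := by
  have nonneg : ∀ (X Y : Finset α), 0 ≤ jaccardDist X Y := by
    intro X Y
    unfold jaccardDist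
    split
    · exact le_refl 0
    · rename_i h
      have hpos : (0 : ℝ) < (X ∪ Y).card := by
        exact_mod_cast card_pos.mpr (nonempty_iff_ne_empty.mpr h)
      have hle : ((X ∩ Y).card : ℝ) ≤ ((X ∪ Y).card : ℝ) := by
        exact_mod_cast card_le_card (inter_subset_union)
      have : ((X ∩ Y).card : ℝ) / ((X ∪ Y).card : ℝ) ≤ 1 := by
        rw [div_le_one hpos]; exact hle
      linarith
  by_cases hAC : A ∪ C = ∅
  · rw [jaccardDist, if_pos hAC]
    exact add_nonneg (nonneg A B) (nonneg B C)
  by_cases hAB : A ∪ B = ∅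
  · obtain ⟨hA, hB⟩ := union_eq_empty.mp hAB
    subst hA; subst hB
    simp [jaccardDist]
  by_cases hBC : B ∪ C = ∅
  · obtain ⟨hB, hC⟩ := union_eq_empty.mp hBC
    subst hB; subst hC
    simp [jaccardDist]
  unfold jaccardDist
  rw [if_neg hAC, if_neg hAB, if_neg hBC]
  rw [jaccard_card_union A C, jaccard_card_union A B, jaccard_card_union B C]
  have h1 : (symmDiff A C).card ≤ (symmDiff A B).card + (symmDiff B C).card := by
    calc (symmDiff A C).card ≤ ((symmDiff A B) ∪ (symmDiff B C)).card :=
          card_le_card (symmDiff_triangle A B C)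
      _ ≤ (symmDiff A B).card + (symmDiff B C).card := card_union_le _ _
  have h2 : (A ∩ B).card ≤ (symmDiff B C).card + (A ∩ C).card := by
    calc (A ∩ B).card ≤ ((symmDiff B C) ∪ (A ∩ C)).card := by
          apply card_le_card
          intro x hx
          simp only [mem_inter, mem_union, mem_symmDiff] at *
          tauto
      _ ≤ (symmDiff B C).card + (A ∩ C).card := card_union_le _ _
  have h3 : (B ∩ C).card ≤ (symmDiff A B).card + (A ∩ C).card := by
    calc (B ∩ C).card ≤ ((symmDiff A B) ∪ (A ∩ C)).card := by
          apply card_le_card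
          intro x hx
          simp only [mem_inter, mem_union, mem_symmDiff] at *
          tauto
      _ ≤ (symmDiff A B).card + (A ∩ C).card := card_union_le _ _
  have dAC : 0 < (symmDiff A C).card + (A ∩ C).card := by
    rw [← jaccard_card_union]; exact card_pos.mpr (nonempty_iff_ne_empty.mpr hAC)
  have dAB : 0 < (symmDiff A B).card + (A ∩ B).card := by
    rw [← jaccard_card_union]; exact card_pos.mpr (nonempty_iff_ne_empty.mpr hAB)
  have dBC : 0 < (symmDiff B C).card + (B ∩ C).card := by
    rw [← jaccard_card_union]; exact card_pos.mpr (nonempty_iff_ne_empty.mpr hBC)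
  push_cast
  apply jaccard_key <;> [skip; skip; skip; skip; skip; skip;
    exact_mod_cast h1; exact_mod_cast h2; exact_mod_cast h3;
    exact_mod_cast dAC; exact_mod_cast dAB; exact_mod_cast dBC] <;> positivity
end

section
/- Let a random hash function h be a uniformly random permutation of a finite universe U, and for a nonempty finite set A ⊆ U define minh(A) as the element of A minimizing h. Then for nonempty finite sets A, B ⊆ U, the probability that minh(A) = minh(B) equals the Jaccard similarity |A ∩ B| / |A ∪ B|. -/
/-!
Call `h` a minimizing bijection for `x` in `S` when `h x` is the least value of `h` on `S`.
Every bijection has exactly one minimizer in `S`, and composing with the transposition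
`swap x y` shows that all elements of `S` are minimizers equally often; so each `x ∈ S` is the
minimizer for a `1 / |S|` fraction of all bijections. With `S = A ∪ B`, the minima over `A` and
over `B` coincide exactly when the minimizer of `A ∪ B` lies in `A ∩ B`.
-/

open Finset

section

variable {α β : Type*} [DecidableEq α] [LinearOrder β]

theorem Equiv.swap_apply_mem {S : Finset α} {x y z : α} (hx : x ∈ S) (hy : y ∈ S)
    (hz : z ∈ S) : Equiv.swap x y z ∈ S := by
  rw [Equiv.swap_apply_def]
  split_ifs <;> assumption

theorem min'_image_eq_min'_image_iff {f : α → β} (hf : Function.Injective f) {A B : Finset α}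
    (hA : A.Nonempty) (hB : B.Nonempty) :
    (A.image f).min' (hA.image f) = (B.image f).min' (hB.image f) ↔
      ∃ x ∈ A ∩ B, ∀ y ∈ A ∪ B, f x ≤ f y := by
  constructor
  · intro hmin
    obtain ⟨a, ha, hfa⟩ := mem_image.mp ((A.image f).min'_mem (hA.image f))
    obtain ⟨b, hb, hfb⟩ := mem_image.mp ((B.image f).min'_mem (hB.image f))
    obtain rfl : a = b := hf (by rw [hfa, hfb, hmin])
    refine ⟨a, mem_inter.mpr ⟨ha, hb⟩, fun y hy => ?_⟩
    rcases mem_union.mp hy with hyA | hyB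
    · exact hfa ▸ min'_le _ _ (mem_image_of_mem f hyA)
    · exact hfb ▸ min'_le _ _ (mem_image_of_mem f hyB)
  · rintro ⟨x, hx, hxmin⟩
    have min'_eq {S : Finset α} (hS : S.Nonempty) (hxS : x ∈ S) (hSAB : S ⊆ A ∪ B) :
        (S.image f).min' (hS.image f) = f x :=
      le_antisymm (min'_le _ _ (mem_image_of_mem f hxS)) <|
        le_min' _ _ _ fun _ hz => by
          obtain ⟨z, hzS, rfl⟩ := mem_image.mp hz
          exact hxmin z (hSAB hzS)
    rw [min'_eq hA (mem_inter.mp hx).1 subset_union_left,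
      min'_eq hB (mem_inter.mp hx).2 subset_union_right]

variable [Fintype α] [Fintype β]

def minimizingEquivs (S : Finset α) (x : α) : Finset (α ≃ β) :=
  {h | ∀ y ∈ S, h x ≤ h y}

theorem card_minimizingEquivs_eq {S : Finset α} {x y : α} (hx : x ∈ S) (hy : y ∈ S) :
    #(minimizingEquivs (β := β) S x) = #(minimizingEquivs (β := β) S y) := by
  refine card_nbij' (fun h : α ≃ β => (Equiv.swap x y).trans h)
    (fun h : α ≃ β => (Equiv.swap x y).trans h) ?_ ?_ ?_ ?_
  · intro h hh
    simp only [mem_coe, minimizingEquivs, mem_filter, mem_univ, true_and,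
      Equiv.trans_apply, Equiv.swap_apply_right] at hh ⊢
    exact fun z hz => hh _ (Equiv.swap_apply_mem hx hy hz)
  · intro h hh
    simp only [mem_coe, minimizingEquivs, mem_filter, mem_univ, true_and,
      Equiv.trans_apply, Equiv.swap_apply_left] at hh ⊢
    exact fun z hz => hh _ (Equiv.swap_apply_mem hx hy hz)
  · intro h _
    ext z
    simp
  · intro h _
    ext z
    simp

theorem pairwiseDisjoint_minimizingEquivs (S : Finset α) :
    (S : Set α).PairwiseDisjoint (minimizingEquivs (β := β) S) := by
  intro x hx y hy hxy
  refine disjoint_left.mpr fun h hhx hhy => hxy (h.injective ?_)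
  simp only [minimizingEquivs, mem_filter, mem_univ, true_and] at hhx hhy
  exact le_antisymm (hhx y hy) (hhy x hx)

theorem biUnion_minimizingEquivs {S : Finset α} (hS : S.Nonempty) :
    S.biUnion (minimizingEquivs (β := β) S) = univ := by
  refine eq_univ_of_forall fun h => ?_
  obtain ⟨x, hx, hxmin⟩ := S.exists_min_image h hS
  exact mem_biUnion.mpr ⟨x, hx, by simpa [minimizingEquivs] using hxmin⟩

theorem card_biUnion_minimizingEquivs {S T : Finset α} (hTS : T ⊆ S) {x₀ : α} (hx₀ : x₀ ∈ S) :
    #(T.biUnion (minimizingEquivs (β := β) S)) = #T * #(minimizingEquivs (β := β) S x₀) := by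
  rw [card_biUnion ((pairwiseDisjoint_minimizingEquivs S).subset (coe_subset.mpr hTS)),
    sum_congr rfl fun x hx => card_minimizingEquivs_eq (hTS hx) hx₀, sum_const, smul_eq_mul]

theorem filter_min'_image_eq_min'_image {A B : Finset α} (hA : A.Nonempty) (hB : B.Nonempty) :
    ({h : α ≃ β | (A.image h).min' (hA.image h) = (B.image h).min' (hB.image h)} :
        Finset (α ≃ β)) =
      (A ∩ B).biUnion (minimizingEquivs (A ∪ B)) := by
  ext h
  simp only [mem_filter, mem_univ, true_and, mem_biUnion, minimizingEquivs]
  exact min'_image_eq_min'_image_iff h.injective hA hB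

end

/-- MinHash: for a uniformly random bijection `h : U ≃ Fin |U|` of a finite
universe, and nonempty finite sets `A, B ⊆ U`, the probability that the
`h`-minimal element of `A` coincides with the `h`-minimal element of `B` equals
the Jaccard similarity `|A ∩ B| / |A ∪ B|`. -/
theorem minhash_collision_eq_jaccard {α : Type*} [Fintype α] [DecidableEq α]
    (A B : Finset α) (hA : A.Nonempty) (hB : B.Nonempty) :
    ((Finset.univ.filter (fun h : α ≃ Fin (Fintype.card α) =>
        (A.image h).min' (hA.image h) = (B.image h).min' (hB.image h))).card : ℝ) /
      (Fintype.card (α ≃ Fin (Fintype.card α)) : ℝ)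
    = ((A ∩ B).card : ℝ) / ((A ∪ B).card : ℝ) := by
  obtain ⟨x₀, hx₀⟩ : (A ∪ B).Nonempty := hA.mono subset_union_left
  set N := #(minimizingEquivs (β := Fin (Fintype.card α)) (A ∪ B) x₀)
  have hcollide : #{h : α ≃ Fin (Fintype.card α) |
      (A.image h).min' (hA.image h) = (B.image h).min' (hB.image h)} = #(A ∩ B) * N := by
    rw [filter_min'_image_eq_min'_image hA hB,
      card_biUnion_minimizingEquivs inter_subset_union hx₀]
  have htotal : Fintype.card (α ≃ Fin (Fintype.card α)) = #(A ∪ B) * N := by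
    rw [← card_univ, ← biUnion_minimizingEquivs ⟨x₀, hx₀⟩,
      card_biUnion_minimizingEquivs subset_rfl hx₀]
  have hN : (N : ℝ) ≠ 0 := by
    have : 0 < Fintype.card (α ≃ Fin (Fintype.card α)) :=
      Fintype.card_pos_iff.mpr ⟨Fintype.equivFin α⟩
    rw [htotal] at this
    exact_mod_cast (pos_of_mul_pos_right this (Nat.zero_le _)).ne'
  rw [hcollide, htotal, Nat.cast_mul, Nat.cast_mul, mul_div_mul_right _ _ hN]
end
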